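/- arXiv:2605.29032 — 4 statements merged into one kernel-verified Lean document; each statement's English description precedes it below -/
import Mathlib

section
/- Per-policy Error-MDP bound: Let (S,d) be a finite metric space and P, P̂ two transition kernels on the same finite MDP (reward r with 0 ≤ r ≤ R_max, discount γ ∈ (0,1), initial distribution ρ₀). If π is a stationary policy whose value function V_π^{P̂} is L_v-Lipschitz with respect to d, then |V_π(P) − V_π(P̂)| ≤ γ·L_v · Σ_{(s,a)} d_π(s,a)·W₁(P(·|s,a), P̂(·|s,a)), where d_π is the unnormalized occupancy of π under P. -/
open Finset Real

/-- `p` is a probability mass function on a finite type. -/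
def IsPMF {X : Type*} [Fintype X] (p : X → ℝ) : Prop :=
  (∀ x, 0 ≤ p x) ∧ ∑ x, p x = 1

/-- `P` is a transition kernel: each `P s a` is a pmf on states. -/
def IsKernel {S A : Type*} [Fintype S] [Fintype A] (P : S → A → S → ℝ) : Prop :=
  ∀ s a, IsPMF (P s a)

/-- `pol` is a stationary policy: each `pol s` is a pmf on actions. -/
def IsPolicy {S A : Type*} [Fintype S] [Fintype A] (pol : S → A → ℝ) : Prop :=
  ∀ s, IsPMF (pol s)

/-- `V` satisfies the Bellman evaluation equation for policy `pol` under kernel `P`,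
reward `r` and discount `γ`. -/
def IsValue {S A : Type*} [Fintype S] [Fintype A] (P : S → A → S → ℝ) (pol : S → A → ℝ)
    (r : S → A → ℝ) (γ : ℝ) (V : S → ℝ) : Prop :=
  ∀ s, V s = ∑ a, pol s a * (r s a + γ * ∑ s', P s a s' * V s')

/-- `d` is the (unnormalized) discounted state-action occupancy of `pol` under kernel `P`
with initial distribution `ρ₀` and discount `γ`. -/
def IsOcc {S A : Type*} [Fintype S] [Fintype A] (P : S → A → S → ℝ) (pol : S → A → ℝ)
    (ρ₀ : S → ℝ) (γ : ℝ) (d : S → A → ℝ) : Prop :=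
  ∀ s a, d s a = pol s a * (ρ₀ s + γ * ∑ x : S × A, d x.1 x.2 * P x.1 x.2 s)

/-- ℓ₁ distance between two pmfs on a finite type. -/
noncomputable def l1Dist {X : Type*} [Fintype X] (p q : X → ℝ) : ℝ :=
  ∑ x, |p x - q x|

/-- Total variation distance between two pmfs on a finite type. -/
noncomputable def tvDist {X : Type*} [Fintype X] (p q : X → ℝ) : ℝ :=
  (1 / 2) * ∑ x, |p x - q x|

/-- Kullback-Leibler divergence between two pmfs on a finite type (finite under
absolute continuity). -/
noncomputable def klF {X : Type*} [Fintype X] (p q : X → ℝ) : ℝ :=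
  ∑ x, p x * Real.log (p x / q x)

/-- `d_data` satisfies κ-coverage for the policy set `Pol` under kernel `P`:
every occupancy of a policy in `Pol` is dominated by `κ · d_data`. -/
def KappaCoverage {S A : Type*} [Fintype S] [Fintype A] (P : S → A → S → ℝ) (ρ₀ : S → ℝ)
    (γ : ℝ) (Pol : Set (S → A → ℝ)) (ddata : S → A → ℝ) (κ : ℝ) : Prop :=
  ∀ pol ∈ Pol, ∀ dpol : S → A → ℝ, IsOcc P pol ρ₀ γ dpol → ∀ s a, dpol s a ≤ κ * ddata s a

/-- Critic discrepancy `Δ_{D,P̂}(s,a)`. -/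
noncomputable def critDelta {S A : Type*} [Fintype S] (P Phat : S → A → S → ℝ)
    (D : S → A → S → ℝ) (s : S) (a : A) : ℝ :=
  (∑ s', P s a s' * D s a s') - ∑ s', Phat s a s' * D s a s'

/-- Supremum over the critic class of the critic discrepancy at `(s,a)`. -/
noncomputable def critSup {S A : Type*} [Fintype S] (𝒟 : Set (S → A → S → ℝ))
    (P Phat : S → A → S → ℝ) (s : S) (a : A) : ℝ :=
  sSup {y | ∃ D ∈ 𝒟, y = critDelta P Phat D s a}

/-- 1-Wasserstein distance between two pmfs on a finite metric space
(Kantorovich–Rubinstein dual form). -/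
noncomputable def w1 {X : Type*} [Fintype X] [MetricSpace X] (p q : X → ℝ) : ℝ :=
  sSup {y | ∃ f : X → ℝ, (∀ a b, |f a - f b| ≤ dist a b) ∧ y = ∑ x, (p x - q x) * f x}

lemma sum_pol_mul {S A : Type*} [Fintype S] [Fintype A] (pol : S → A → ℝ)
    (hpol : IsPolicy pol) (c : S → ℝ) :
    ∑ x : S × A, pol x.1 x.2 * c x.1 = ∑ s, c s := by
  rw [Fintype.sum_prod_type]
  exact Finset.sum_congr rfl fun s _ => by
    show ∑ a, pol s a * c s = c s
    rw [← Finset.sum_mul, (hpol s).2, one_mul]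

noncomputable def occIter {S A : Type*} [Fintype S] [Fintype A]
    (P : S → A → S → ℝ) (pol : S → A → ℝ) (ρ₀ : S → ℝ) (γ : ℝ) : ℕ → S × A → ℝ
  | 0 => fun x => pol x.1 x.2 * ρ₀ x.1
  | (n+1) => fun x =>
      pol x.1 x.2 * (γ * ∑ y : S × A, occIter P pol ρ₀ γ n y * P y.1 y.2 x.1)

lemma occIter_nonneg {S A : Type*} [Fintype S] [Fintype A]
    (P : S → A → S → ℝ) (pol : S → A → ℝ) (ρ₀ : S → ℝ) (γ : ℝ)
    (hP : IsKernel P) (hpol : IsPolicy pol) (hρ : IsPMF ρ₀) (hγ0 : 0 ≤ γ) :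
    ∀ n x, 0 ≤ occIter P pol ρ₀ γ n x := by
  intro n
  induction n with
  | zero => exact fun x => mul_nonneg ((hpol x.1).1 x.2) (hρ.1 x.1)
  | succ n ih =>
    exact fun x => mul_nonneg ((hpol x.1).1 x.2) (mul_nonneg hγ0
      (Finset.sum_nonneg fun y _ => mul_nonneg (ih y) ((hP y.1 y.2).1 x.1)))

lemma occIter_sum {S A : Type*} [Fintype S] [Fintype A]
    (P : S → A → S → ℝ) (pol : S → A → ℝ) (ρ₀ : S → ℝ) (γ : ℝ)
    (hP : IsKernel P) (hpol : IsPolicy pol) (hρ : IsPMF ρ₀) :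
    ∀ n, ∑ x : S × A, occIter P pol ρ₀ γ n x = γ ^ n := by
  intro n
  induction n with
  | zero => simpa [occIter] using (sum_pol_mul pol hpol ρ₀).trans hρ.2
  | succ n ih =>
    have h1 : ∑ x : S × A, occIter P pol ρ₀ γ (n+1) x
        = ∑ s, γ * ∑ y : S × A, occIter P pol ρ₀ γ n y * P y.1 y.2 s := by
      simp only [occIter]
      exact sum_pol_mul pol hpol (fun s => γ * ∑ y : S × A, occIter P pol ρ₀ γ n y * P y.1 y.2 s)
    have h2 : ∑ s, ∑ y : S × A, occIter P pol ρ₀ γ n y * P y.1 y.2 s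
        = ∑ y : S × A, occIter P pol ρ₀ γ n y := by
      rw [Finset.sum_comm]
      exact Finset.sum_congr rfl fun y _ => by
        rw [← Finset.mul_sum, (hP y.1 y.2).2, mul_one]
    rw [h1, ← Finset.mul_sum, h2, ih, pow_succ]
    ring

lemma occIter_le {S A : Type*} [Fintype S] [Fintype A]
    (P : S → A → S → ℝ) (pol : S → A → ℝ) (ρ₀ : S → ℝ) (γ : ℝ)
    (hP : IsKernel P) (hpol : IsPolicy pol) (hρ : IsPMF ρ₀) (hγ0 : 0 ≤ γ) :
    ∀ n x, occIter P pol ρ₀ γ n x ≤ γ ^ n := by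
  intro n x
  calc occIter P pol ρ₀ γ n x
      ≤ ∑ y : S × A, occIter P pol ρ₀ γ n y :=
        Finset.single_le_sum (fun y _ => occIter_nonneg P pol ρ₀ γ hP hpol hρ hγ0 n y)
          (Finset.mem_univ x)
    _ = γ ^ n := occIter_sum P pol ρ₀ γ hP hpol hρ n

lemma occIter_summable {S A : Type*} [Fintype S] [Fintype A]
    (P : S → A → S → ℝ) (pol : S → A → ℝ) (ρ₀ : S → ℝ) (γ : ℝ)
    (hP : IsKernel P) (hpol : IsPolicy pol) (hρ : IsPMF ρ₀) (hγ0 : 0 ≤ γ) (hγ1 : γ < 1)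
    (x : S × A) : Summable (fun n => occIter P pol ρ₀ γ n x) :=
  Summable.of_nonneg_of_le (fun n => occIter_nonneg P pol ρ₀ γ hP hpol hρ hγ0 n x)
    (fun n => occIter_le P pol ρ₀ γ hP hpol hρ hγ0 n x)
    (summable_geometric_of_lt_one hγ0 hγ1)

lemma occ_nonneg {S A : Type*} [Fintype S] [Fintype A]
    (P : S → A → S → ℝ) (pol : S → A → ℝ) (ρ₀ : S → ℝ) (γ : ℝ)
    (hP : IsKernel P) (hpol : IsPolicy pol) (hρ : IsPMF ρ₀)
    (hγ0 : 0 < γ) (hγ1 : γ < 1)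
    (d : S → A → ℝ) (hd : IsOcc P pol ρ₀ γ d) : ∀ s a, 0 ≤ d s a := by
  classical
  set e := occIter P pol ρ₀ γ with he
  have hsum : ∀ x : S × A, Summable (fun n => e n x) :=
    occIter_summable P pol ρ₀ γ hP hpol hρ hγ0.le hγ1
  set D : S × A → ℝ := fun x => ∑' n, e n x with hD
  have hDnn : ∀ x, 0 ≤ D x := fun x =>
    tsum_nonneg (fun n => occIter_nonneg P pol ρ₀ γ hP hpol hρ hγ0.le n x)
  -- D satisfies the fixed-point equation
  have hDfix : ∀ x : S × A,
      D x = pol x.1 x.2 * (ρ₀ x.1 + γ * ∑ y : S × A, D y * P y.1 y.2 x.1) := by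
    intro x
    have h1 : D x = e 0 x + ∑' n, e (n+1) x := by
      rw [hD]
      exact Summable.tsum_eq_zero_add (hsum x)
    have h2 : ∀ n, e (n+1) x
        = pol x.1 x.2 * γ * ∑ y : S × A, e n y * P y.1 y.2 x.1 := by
      intro n; rw [he]; show occIter P pol ρ₀ γ (n+1) x = _; rw [occIter]; ring
    have hsum2 : ∀ y : S × A, Summable (fun n => e n y * P y.1 y.2 x.1) :=
      fun y => (hsum y).mul_right _
    have h3 : ∑' n, e (n+1) x
        = pol x.1 x.2 * γ * ∑ y : S × A, D y * P y.1 y.2 x.1 := by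
      calc ∑' n, e (n+1) x
          = ∑' n, pol x.1 x.2 * γ * ∑ y : S × A, e n y * P y.1 y.2 x.1 := by
            exact tsum_congr h2
        _ = pol x.1 x.2 * γ * ∑' n, ∑ y : S × A, e n y * P y.1 y.2 x.1 := by
            rw [tsum_mul_left]
        _ = pol x.1 x.2 * γ * ∑ y : S × A, ∑' n, e n y * P y.1 y.2 x.1 := by
            rw [Summable.tsum_finsetSum (fun y _ => hsum2 y)]
        _ = pol x.1 x.2 * γ * ∑ y : S × A, D y * P y.1 y.2 x.1 := by
            congr 1
            exact Finset.sum_congr rfl fun y _ => tsum_mul_right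
    have h0 : e 0 x = pol x.1 x.2 * ρ₀ x.1 := rfl
    rw [h1, h3, h0]; ring
  -- uniqueness: d = D
  have key : ∀ x : S × A, d x.1 x.2 = D x := by
    set h : S × A → ℝ := fun x => d x.1 x.2 - D x with hh
    have hfix : ∀ x : S × A,
        h x = pol x.1 x.2 * γ * ∑ y : S × A, h y * P y.1 y.2 x.1 := by
      intro x
      have := hd x.1 x.2
      have h2 := hDfix x
      rw [hh]; dsimp only
      rw [this, h2]
      have : ∑ y : S × A, (d y.1 y.2 - D y) * P y.1 y.2 x.1
          = (∑ y : S × A, d y.1 y.2 * P y.1 y.2 x.1)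
            - ∑ y : S × A, D y * P y.1 y.2 x.1 := by
        rw [← Finset.sum_sub_distrib]
        exact Finset.sum_congr rfl fun y _ => by ring
      rw [this]; ring
    set N : ℝ := ∑ x : S × A, |h x| with hN
    have hNnn : 0 ≤ N := Finset.sum_nonneg fun x _ => abs_nonneg _
    have hle : N ≤ γ * N := by
      have step : ∀ x : S × A, |h x| ≤ pol x.1 x.2 * (γ * ∑ y : S × A, |h y| * P y.1 y.2 x.1) := by
        intro x
        rw [hfix x, abs_mul, abs_mul]
        rw [abs_of_nonneg ((hpol x.1).1 x.2), abs_of_nonneg hγ0.le, mul_assoc]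
        refine mul_le_mul_of_nonneg_left (mul_le_mul_of_nonneg_left ?_ hγ0.le)
          ((hpol x.1).1 x.2)
        calc |∑ y : S × A, h y * P y.1 y.2 x.1|
            ≤ ∑ y : S × A, |h y * P y.1 y.2 x.1| := Finset.abs_sum_le_sum_abs _ _
          _ = ∑ y : S × A, |h y| * P y.1 y.2 x.1 := Finset.sum_congr rfl fun y _ => by
              rw [abs_mul, abs_of_nonneg ((hP y.1 y.2).1 x.1)]
      calc N ≤ ∑ x : S × A, pol x.1 x.2 * (γ * ∑ y : S × A, |h y| * P y.1 y.2 x.1) :=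
            Finset.sum_le_sum fun x _ => step x
        _ = ∑ s, γ * ∑ y : S × A, |h y| * P y.1 y.2 s :=
            sum_pol_mul pol hpol (fun s => γ * ∑ y : S × A, |h y| * P y.1 y.2 s)
        _ = γ * ∑ s, ∑ y : S × A, |h y| * P y.1 y.2 s := by rw [← Finset.mul_sum]
        _ = γ * N := by
            rw [Finset.sum_comm]
            congr 1
            rw [hN]
            exact Finset.sum_congr rfl fun y _ => by
              rw [← Finset.mul_sum, (hP y.1 y.2).2, mul_one]
    have hN0 : N = 0 := by nlinarith
    intro x
    have : |h x| = 0 := by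
      have := (Finset.sum_eq_zero_iff_of_nonneg (fun y _ => abs_nonneg (h y))).1 hN0 x
        (Finset.mem_univ x)
      exact this
    have := abs_eq_zero.1 this
    have : d x.1 x.2 - D x = 0 := this
    linarith
  intro s a
  rw [show d s a = D (s, a) from key (s, a)]
  exact hDnn _

lemma w1_bddAbove {X : Type*} [Fintype X] [Nonempty X] [MetricSpace X]
    (p q : X → ℝ) (hpq : ∑ x, p x = ∑ x, q x) :
    BddAbove {y | ∃ f : X → ℝ, (∀ a b, |f a - f b| ≤ dist a b) ∧ y = ∑ x, (p x - q x) * f x} := by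
  obtain ⟨x0⟩ := ‹Nonempty X›
  refine ⟨∑ x, |p x - q x| * dist x x0, ?_⟩
  rintro y ⟨f, hf, rfl⟩
  have h0 : ∑ x, (p x - q x) * f x = ∑ x, (p x - q x) * (f x - f x0) := by
    have : ∑ x, (p x - q x) * f x0 = 0 := by
      rw [← Finset.sum_mul, Finset.sum_sub_distrib, hpq, sub_self, zero_mul]
    calc ∑ x, (p x - q x) * f x
        = ∑ x, ((p x - q x) * (f x - f x0) + (p x - q x) * f x0) :=
          Finset.sum_congr rfl fun x _ => by ring
      _ = (∑ x, (p x - q x) * (f x - f x0)) + ∑ x, (p x - q x) * f x0 :=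
          Finset.sum_add_distrib
      _ = ∑ x, (p x - q x) * (f x - f x0) := by rw [this, add_zero]
  rw [h0]
  refine Finset.sum_le_sum fun x _ => ?_
  calc (p x - q x) * (f x - f x0) ≤ |(p x - q x) * (f x - f x0)| := le_abs_self _
    _ = |p x - q x| * |f x - f x0| := abs_mul _ _
    _ ≤ |p x - q x| * dist x x0 := mul_le_mul_of_nonneg_left (hf x x0) (abs_nonneg _)

lemma le_w1 {X : Type*} [Fintype X] [Nonempty X] [MetricSpace X]
    (p q : X → ℝ) (hpq : ∑ x, p x = ∑ x, q x)
    (f : X → ℝ) (hf : ∀ a b, |f a - f b| ≤ dist a b) :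
    ∑ x, (p x - q x) * f x ≤ w1 p q :=
  le_csSup (w1_bddAbove p q hpq) ⟨f, hf, rfl⟩

lemma value_gap_eq {S A : Type*} [Fintype S] [Fintype A]
    (P Phat : S → A → S → ℝ) (pol : S → A → ℝ) (hpol : IsPolicy pol)
    (r : S → A → ℝ) (γ : ℝ) (ρ₀ : S → ℝ)
    (V Vhat : S → ℝ) (hV : IsValue P pol r γ V) (hVhat : IsValue Phat pol r γ Vhat)
    (dpol : S → A → ℝ) (hd : IsOcc P pol ρ₀ γ dpol) :
    (∑ s, ρ₀ s * V s) - ∑ s, ρ₀ s * Vhat s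
      = γ * ∑ x : S × A, dpol x.1 x.2 *
          ∑ s', (P x.1 x.2 s' - Phat x.1 x.2 s') * Vhat s' := by
  classical
  set Δ : S → ℝ := fun s => V s - Vhat s with hΔ
  set PΔ : S × A → ℝ := fun x => ∑ s', P x.1 x.2 s' * Δ s' with hPΔ
  set err : S × A → ℝ := fun x => ∑ s', (P x.1 x.2 s' - Phat x.1 x.2 s') * Vhat s' with herr
  set m : S → ℝ := fun s => ρ₀ s + γ * ∑ x : S × A, dpol x.1 x.2 * P x.1 x.2 s with hm
  have hdm : ∀ s a, dpol s a = pol s a * m s := fun s a => hd s a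
  -- Bellman difference
  have hBell : ∀ s, Δ s = γ * ∑ a, pol s a * (PΔ (s, a) + err (s, a)) := by
    intro s
    have h1 : Δ s = ∑ a, (pol s a * (r s a + γ * ∑ s', P s a s' * V s')
        - pol s a * (r s a + γ * ∑ s', Phat s a s' * Vhat s')) := by
      rw [hΔ]; dsimp only
      rw [hV s, hVhat s, Finset.sum_sub_distrib]
    rw [h1, Finset.mul_sum]
    refine Finset.sum_congr rfl fun a _ => ?_
    have h2 : PΔ (s, a) + err (s, a)
        = (∑ s', P s a s' * V s') - ∑ s', Phat s a s' * Vhat s' := by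
      rw [hPΔ, herr, hΔ]; dsimp only
      rw [← Finset.sum_add_distrib, ← Finset.sum_sub_distrib]
      exact Finset.sum_congr rfl fun s' _ => by ring
    rw [h2]; ring
  -- the mass A computed two ways
  have hAm : ∑ x : S × A, dpol x.1 x.2 * Δ x.1 = ∑ s, m s * Δ s := by
    rw [Fintype.sum_prod_type]
    refine Finset.sum_congr rfl fun s _ => ?_
    show ∑ a, dpol s a * Δ s = m s * Δ s
    calc ∑ a, dpol s a * Δ s = ∑ a, pol s a * (m s * Δ s) :=
          Finset.sum_congr rfl fun a _ => by rw [hdm s a]; ring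
      _ = (∑ a, pol s a) * (m s * Δ s) := (Finset.sum_mul _ _ _).symm
      _ = m s * Δ s := by rw [(hpol s).2, one_mul]
  have hA1 : ∑ s, m s * Δ s
      = (∑ s, ρ₀ s * Δ s) + γ * ∑ x : S × A, dpol x.1 x.2 * PΔ x := by
    have hswap : ∑ s, (∑ x : S × A, dpol x.1 x.2 * P x.1 x.2 s) * Δ s
        = ∑ x : S × A, dpol x.1 x.2 * PΔ x := by
      calc ∑ s, (∑ x : S × A, dpol x.1 x.2 * P x.1 x.2 s) * Δ s
          = ∑ s, ∑ x : S × A, dpol x.1 x.2 * P x.1 x.2 s * Δ s := by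
            exact Finset.sum_congr rfl fun s _ => Finset.sum_mul _ _ _
        _ = ∑ x : S × A, ∑ s, dpol x.1 x.2 * P x.1 x.2 s * Δ s := Finset.sum_comm
        _ = ∑ x : S × A, dpol x.1 x.2 * PΔ x := by
            refine Finset.sum_congr rfl fun x _ => ?_
            rw [hPΔ]; dsimp only
            rw [Finset.mul_sum]
            exact Finset.sum_congr rfl fun s _ => by ring
    calc ∑ s, m s * Δ s
        = ∑ s, (ρ₀ s * Δ s
            + γ * ((∑ x : S × A, dpol x.1 x.2 * P x.1 x.2 s) * Δ s)) := by
          refine Finset.sum_congr rfl fun s _ => ?_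
          rw [hm]; dsimp only; ring
      _ = (∑ s, ρ₀ s * Δ s)
            + ∑ s, γ * ((∑ x : S × A, dpol x.1 x.2 * P x.1 x.2 s) * Δ s) :=
          Finset.sum_add_distrib
      _ = (∑ s, ρ₀ s * Δ s) + γ * ∑ x : S × A, dpol x.1 x.2 * PΔ x := by
          rw [← Finset.mul_sum, hswap]
  have hA2 : ∑ s, m s * Δ s
      = γ * ((∑ x : S × A, dpol x.1 x.2 * PΔ x) + ∑ x : S × A, dpol x.1 x.2 * err x) := by
    calc ∑ s, m s * Δ s
        = ∑ s, γ * ∑ a, dpol s a * (PΔ (s, a) + err (s, a)) := by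
          refine Finset.sum_congr rfl fun s _ => ?_
          rw [hBell s, Finset.mul_sum, Finset.mul_sum, Finset.mul_sum]
          refine Finset.sum_congr rfl fun a _ => ?_
          rw [hdm s a]; ring
      _ = γ * ∑ s, ∑ a, dpol s a * (PΔ (s, a) + err (s, a)) := by rw [← Finset.mul_sum]
      _ = γ * ∑ x : S × A, dpol x.1 x.2 * (PΔ x + err x) := by
          rw [Fintype.sum_prod_type]
      _ = γ * ((∑ x : S × A, dpol x.1 x.2 * PΔ x) + ∑ x : S × A, dpol x.1 x.2 * err x) := by
          congr 1
          rw [← Finset.sum_add_distrib]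
          exact Finset.sum_congr rfl fun x _ => by ring
  have hmain : ∑ s, ρ₀ s * Δ s = γ * ∑ x : S × A, dpol x.1 x.2 * err x := by
    have := hA1.symm.trans hA2
    linarith [this]
  have hlhs : (∑ s, ρ₀ s * V s) - ∑ s, ρ₀ s * Vhat s = ∑ s, ρ₀ s * Δ s := by
    rw [← Finset.sum_sub_distrib]
    exact Finset.sum_congr rfl fun s _ => by rw [hΔ]; ring
  rw [hlhs, hmain]


/-- **Per-policy Error-MDP bound.** If the simulator value function of a policy is
`Lv`-Lipschitz, then its value gap is bounded by γ·Lv times its occupancy-weighted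
one-step Wasserstein error (its value in the Error-MDP). -/
theorem per_policy_error_mdp_bound
    {S A : Type*} [Fintype S] [Fintype A] [Nonempty S] [Nonempty A] [MetricSpace S]
    (P Phat : S → A → S → ℝ) (hP : IsKernel P) (hPhat : IsKernel Phat)
    (r : S → A → ℝ) (Rmax : ℝ) (hr : ∀ s a, 0 ≤ r s a ∧ r s a ≤ Rmax)
    (γ : ℝ) (hγ0 : 0 < γ) (hγ1 : γ < 1)
    (ρ₀ : S → ℝ) (hρ : IsPMF ρ₀)
    (pol : S → A → ℝ) (hpol : IsPolicy pol)
    (V Vhat : S → ℝ) (hV : IsValue P pol r γ V) (hVhat : IsValue Phat pol r γ Vhat)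
    (Lv : ℝ) (hLip : ∀ x y, |Vhat x - Vhat y| ≤ Lv * dist x y)
    (dpol : S → A → ℝ) (hd : IsOcc P pol ρ₀ γ dpol) :
    |(∑ s, ρ₀ s * V s) - ∑ s, ρ₀ s * Vhat s| ≤
      γ * Lv * ∑ x : S × A, dpol x.1 x.2 * w1 (P x.1 x.2) (Phat x.1 x.2) := by
  classical
  have hdnn : ∀ s a, 0 ≤ dpol s a := occ_nonneg P pol ρ₀ γ hP hpol hρ hγ0 hγ1 dpol hd
  rw [value_gap_eq P Phat pol hpol r γ ρ₀ V Vhat hV hVhat dpol hd]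
  classical
  set err : S × A → ℝ := fun x => ∑ s', (P x.1 x.2 s' - Phat x.1 x.2 s') * Vhat s' with herr
  have hpq : ∀ x : S × A, ∑ s', P x.1 x.2 s' = ∑ s', Phat x.1 x.2 s' := fun x => by
    rw [(hP x.1 x.2).2, (hPhat x.1 x.2).2]
  rcases lt_or_ge Lv 0 with hLv | hLv
  · -- degenerate: S is a subsingleton
    have hsub : ∀ x y : S, x = y := by
      intro x y; by_contra hxy
      have h1 := hLip x y
      have h2 : 0 < dist x y := dist_pos.2 hxy
      nlinarith [abs_nonneg (Vhat x - Vhat y)]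
    obtain ⟨x0⟩ := ‹Nonempty S›
    have hconst : ∀ g : S → ℝ, ∀ s, g s = g x0 := fun g s => congrArg g (hsub s x0)
    have hzero : ∀ (p q : S → ℝ), (∑ s', p s' = ∑ s', q s') → ∀ g : S → ℝ,
        ∑ s', (p s' - q s') * g s' = 0 := by
      intro p q hpq' g
      calc ∑ s', (p s' - q s') * g s' = ∑ s', (p s' - q s') * g x0 :=
            Finset.sum_congr rfl fun s' _ => by rw [hconst g s']
        _ = ((∑ s', p s') - ∑ s', q s') * g x0 := by
            rw [← Finset.sum_mul, Finset.sum_sub_distrib]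
        _ = 0 := by rw [hpq', sub_self, zero_mul]
    have herr0 : ∀ x : S × A, err x = 0 := fun x => hzero _ _ (hpq x) Vhat
    have hw0 : ∀ x : S × A, w1 (P x.1 x.2) (Phat x.1 x.2) = 0 := by
      intro x
      have : {y | ∃ f : S → ℝ, (∀ a b, |f a - f b| ≤ dist a b) ∧
          y = ∑ s', (P x.1 x.2 s' - Phat x.1 x.2 s') * f s'} = {(0 : ℝ)} := by
        ext y
        constructor
        · rintro ⟨f, hf, rfl⟩
          exact hzero _ _ (hpq x) f
        · rintro rfl
          exact ⟨fun _ => 0, fun a b => by simpa using dist_nonneg, by simp⟩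
      rw [w1, this, csSup_singleton]
    have hE : ∑ x : S × A, dpol x.1 x.2 * err x = 0 :=
      Finset.sum_eq_zero fun x _ => by rw [herr0 x, mul_zero]
    have hW : ∑ x : S × A, dpol x.1 x.2 * w1 (P x.1 x.2) (Phat x.1 x.2) = 0 :=
      Finset.sum_eq_zero fun x _ => by rw [hw0 x, mul_zero]
    calc |γ * ∑ x : S × A, dpol x.1 x.2 * err x|
        = 0 := by rw [hE, mul_zero, abs_zero]
      _ ≤ 0 := le_refl 0
      _ = γ * Lv * ∑ x : S × A, dpol x.1 x.2 * w1 (P x.1 x.2) (Phat x.1 x.2) := by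
          rw [hW, mul_zero]
  · -- main case : 0 ≤ Lv
    have herrle : ∀ x : S × A, |err x| ≤ Lv * w1 (P x.1 x.2) (Phat x.1 x.2) := by
      intro x
      rcases eq_or_lt_of_le hLv with hLv0 | hLvpos
      · -- Lv = 0 : Vhat constant
        obtain ⟨x0⟩ := ‹Nonempty S›
        have hconst : ∀ s, Vhat s = Vhat x0 := by
          intro s
          have := hLip s x0
          rw [← hLv0, zero_mul] at this
          have := abs_eq_zero.1 (le_antisymm this (abs_nonneg _))
          linarith [sub_eq_zero.1 this]
        have : err x = 0 := by
          rw [herr]; dsimp only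
          calc ∑ s', (P x.1 x.2 s' - Phat x.1 x.2 s') * Vhat s'
              = ∑ s', (P x.1 x.2 s' - Phat x.1 x.2 s') * Vhat x0 :=
                Finset.sum_congr rfl fun s' _ => by rw [hconst s']
            _ = ((∑ s', P x.1 x.2 s') - ∑ s', Phat x.1 x.2 s') * Vhat x0 := by
                rw [← Finset.sum_mul, Finset.sum_sub_distrib]
            _ = 0 := by rw [hpq x, sub_self, zero_mul]
        rw [this, abs_zero, ← hLv0, zero_mul]
      · -- Lv > 0
        set f : S → ℝ := fun s => Vhat s / Lv with hfdef
        have hf : ∀ a b, |f a - f b| ≤ dist a b := by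
          intro a b
          rw [hfdef]; dsimp only
          rw [div_sub_div_same, abs_div, abs_of_pos hLvpos, div_le_iff₀ hLvpos]
          calc |Vhat a - Vhat b| ≤ Lv * dist a b := hLip a b
            _ = dist a b * Lv := mul_comm _ _
        have hfneg : ∀ a b, |(-f) a - (-f) b| ≤ dist a b := by
          intro a b
          have h' : (-f) a - (-f) b = -(f a - f b) := by simp; ring
          rw [h', abs_neg, abs_sub_comm]
          calc |f b - f a| ≤ dist b a := hf b a
            _ = dist a b := dist_comm b a
        have hsumf : ∑ s', (P x.1 x.2 s' - Phat x.1 x.2 s') * f s' = err x / Lv := by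
          rw [herr]; dsimp only
          rw [hfdef, Finset.sum_div]
          exact Finset.sum_congr rfl fun s' _ => by dsimp only; ring
        have h1 := le_w1 (P x.1 x.2) (Phat x.1 x.2) (hpq x) f hf
        have h2 := le_w1 (P x.1 x.2) (Phat x.1 x.2) (hpq x) (-f) hfneg
        rw [hsumf] at h1
        have hsumfneg : ∑ s', (P x.1 x.2 s' - Phat x.1 x.2 s') * (-f) s'
            = -(err x / Lv) := by
          calc ∑ s', (P x.1 x.2 s' - Phat x.1 x.2 s') * (-f) s'
              = ∑ s', -((P x.1 x.2 s' - Phat x.1 x.2 s') * f s') :=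
                Finset.sum_congr rfl fun s' _ => by simp
            _ = -∑ s', (P x.1 x.2 s' - Phat x.1 x.2 s') * f s' := by
                rw [Finset.sum_neg_distrib]
            _ = -(err x / Lv) := by rw [hsumf]
        rw [hsumfneg] at h2
        have habs : |err x / Lv| ≤ w1 (P x.1 x.2) (Phat x.1 x.2) := abs_le.2 ⟨by linarith, h1⟩
        rw [abs_div, abs_of_pos hLvpos, div_le_iff₀ hLvpos] at habs
        calc |err x| ≤ w1 (P x.1 x.2) (Phat x.1 x.2) * Lv := habs
          _ = Lv * w1 (P x.1 x.2) (Phat x.1 x.2) := mul_comm _ _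
    calc |γ * ∑ x : S × A, dpol x.1 x.2 * err x|
        = γ * |∑ x : S × A, dpol x.1 x.2 * err x| := by
          rw [abs_mul, abs_of_pos hγ0]
      _ ≤ γ * ∑ x : S × A, dpol x.1 x.2 * (Lv * w1 (P x.1 x.2) (Phat x.1 x.2)) := by
          refine mul_le_mul_of_nonneg_left ?_ hγ0.le
          calc |∑ x : S × A, dpol x.1 x.2 * err x|
              ≤ ∑ x : S × A, |dpol x.1 x.2 * err x| := Finset.abs_sum_le_sum_abs _ _
            _ ≤ ∑ x : S × A, dpol x.1 x.2 * (Lv * w1 (P x.1 x.2) (Phat x.1 x.2)) := by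
                refine Finset.sum_le_sum fun x _ => ?_
                rw [abs_mul, abs_of_nonneg (hdnn x.1 x.2)]
                exact mul_le_mul_of_nonneg_left (herrle x) (hdnn x.1 x.2)
      _ = γ * Lv * ∑ x : S × A, dpol x.1 x.2 * w1 (P x.1 x.2) (Phat x.1 x.2) := by
          rw [Finset.mul_sum, Finset.mul_sum]
          exact Finset.sum_congr rfl fun x _ => by ring
end

section
/- One-step Lipschitz propagation through the Bellman optimality operator: Let (S,d) be a finite metric space, A a nonempty finite set, P̂ a transition kernel, r : S × A → ℝ, and γ ∈ (0,1). Assume |r(s,a) − r(s',a)| ≤ L_r·d(s,s') for all s, s' ∈ S and a ∈ A, and W₁(P̂(·|s,a), P̂(·|s',a)) ≤ L_P·d(s,s') for all s, s' ∈ S and a ∈ A. If V : S → ℝ satisfies |V(x) − V(y)| ≤ L·d(x,y) for all x, y ∈ S with L ≥ 0, then the function s ↦ max_{a∈A} ( r(s,a) + γ·Σ_{s'} P̂(s'|s,a)·V(s') ) is (L_r + γ·L_P·L)-Lipschitz with respect to d. -/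
open Finset Real

lemma sum_sub_pmf_zero {S : Type*} [Fintype S] {p q : S → ℝ} (hp : IsPMF p) (hq : IsPMF q) :
    ∑ x, (p x - q x) = 0 := by
  simp [Finset.sum_sub_distrib, hp.2, hq.2]

lemma pair_le_w1 {S : Type*} [Fintype S] [MetricSpace S] [Nonempty S]
    {p q : S → ℝ} (hp : IsPMF p) (hq : IsPMF q)
    {L : ℝ} (hL : 0 ≤ L) {V : S → ℝ} (hV : ∀ x y, |V x - V y| ≤ L * dist x y) :
    ∑ x, (p x - q x) * V x ≤ L * w1 p q := by
  obtain ⟨x0⟩ := ‹Nonempty S›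
  have h0 : ∑ x, (p x - q x) = 0 := sum_sub_pmf_zero hp hq
  rcases eq_or_lt_of_le hL with hL0 | hL0
  · have hconst : ∀ x, V x = V x0 := by
      intro x
      have h1 := hV x x0
      rw [← hL0, zero_mul] at h1
      have h2 : |V x - V x0| = 0 := le_antisymm h1 (abs_nonneg _)
      have := abs_eq_zero.mp h2
      linarith
    have : ∑ x, (p x - q x) * V x = ∑ x, (p x - q x) * V x0 := by
      refine Finset.sum_congr rfl fun x _ => by rw [hconst x]
    rw [this, ← Finset.sum_mul, h0, zero_mul, ← hL0, zero_mul]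
  · set W := fun x => V x / L with hW
    have hWlip : ∀ a b, |W a - W b| ≤ dist a b := by
      intro a b
      rw [hW]
      simp only
      rw [div_sub_div_same, abs_div, abs_of_pos hL0, div_le_iff₀ hL0, mul_comm]
      exact hV a b
    have hbdd : BddAbove {y | ∃ f : S → ℝ, (∀ a b, |f a - f b| ≤ dist a b) ∧
        y = ∑ x, (p x - q x) * f x} := by
      refine ⟨∑ x, |p x - q x| * dist x x0, ?_⟩
      rintro y ⟨f, hf, rfl⟩
      have heq : ∑ x, (p x - q x) * f x = ∑ x, (p x - q x) * (f x - f x0) := by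
        simp only [mul_sub]
        rw [Finset.sum_sub_distrib, ← Finset.sum_mul, h0, zero_mul, sub_zero]
      rw [heq]
      refine Finset.sum_le_sum fun x _ => ?_
      calc (p x - q x) * (f x - f x0) ≤ |(p x - q x) * (f x - f x0)| := le_abs_self _
        _ = |p x - q x| * |f x - f x0| := abs_mul _ _
        _ ≤ |p x - q x| * dist x x0 := by
            exact mul_le_mul_of_nonneg_left (hf x x0) (abs_nonneg _)
    have hmem : (∑ x, (p x - q x) * W x) ∈ {y | ∃ f : S → ℝ,
        (∀ a b, |f a - f b| ≤ dist a b) ∧ y = ∑ x, (p x - q x) * f x} :=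
      ⟨W, hWlip, rfl⟩
    have hle : ∑ x, (p x - q x) * W x ≤ w1 p q := le_csSup hbdd hmem
    have hrw : ∑ x, (p x - q x) * V x = L * ∑ x, (p x - q x) * W x := by
      rw [Finset.mul_sum]
      refine Finset.sum_congr rfl fun x _ => ?_
      rw [hW]; field_simp
    rw [hrw]
    exact mul_le_mul_of_nonneg_left hle hL0.le

/-- **One-step Lipschitz propagation through the Bellman optimality operator.**
If `V` is `L`-Lipschitz, rewards are `Lr`-Lipschitz and the kernel is `LP`-Lipschitz in
`W₁`, then `T*V` is `(Lr + γ LP L)`-Lipschitz. -/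
theorem bellman_operator_lipschitz_propagation
    {S A : Type*} [Fintype S] [Fintype A] [Nonempty S] [Nonempty A] [MetricSpace S]
    (Phat : S → A → S → ℝ) (hPhat : IsKernel Phat)
    (r : S → A → ℝ) (γ : ℝ) (hγ0 : 0 < γ) (hγ1 : γ < 1)
    (Lr LP : ℝ)
    (hLr : ∀ s s' a, |r s a - r s' a| ≤ Lr * dist s s')
    (hLP : ∀ s s' a, w1 (Phat s a) (Phat s' a) ≤ LP * dist s s')
    (L : ℝ) (hL : 0 ≤ L)
    (V : S → ℝ) (hVlip : ∀ x y, |V x - V y| ≤ L * dist x y) :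
    ∀ s s',
      |(⨆ a : A, (r s a + γ * ∑ s'', Phat s a s'' * V s'')) -
        ⨆ a : A, (r s' a + γ * ∑ s'', Phat s' a s'' * V s'')| ≤
      (Lr + γ * LP * L) * dist s s' := by
  intro s s'
  set F : S → A → ℝ := fun t a => r t a + γ * ∑ s'', Phat t a s'' * V s'' with hF
  have key : ∀ t t' : S, ∀ a : A, F t a - F t' a ≤ (Lr + γ * LP * L) * dist t t' := by
    intro t t' a
    have h1 : r t a - r t' a ≤ Lr * dist t t' := (abs_le.mp (hLr t t' a)).2
    have h2 : ∑ x, (Phat t a x - Phat t' a x) * V x ≤ L * w1 (Phat t a) (Phat t' a) :=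
      pair_le_w1 (hPhat t a) (hPhat t' a) hL hVlip
    have h3 : L * w1 (Phat t a) (Phat t' a) ≤ L * (LP * dist t t') :=
      mul_le_mul_of_nonneg_left (hLP t t' a) hL
    have h4 : (∑ s'', Phat t a s'' * V s'') - ∑ s'', Phat t' a s'' * V s''
        = ∑ x, (Phat t a x - Phat t' a x) * V x := by
      simp only [sub_mul]
      rw [Finset.sum_sub_distrib]
    have h5 : γ * ((∑ s'', Phat t a s'' * V s'') - ∑ s'', Phat t' a s'' * V s'')
        ≤ γ * (L * (LP * dist t t')) := by
      rw [h4]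
      exact mul_le_mul_of_nonneg_left (h2.trans h3) hγ0.le
    simp only [hF]
    nlinarith [h5]
  have hbddA : ∀ t : S, BddAbove (Set.range (F t)) := fun t =>
    Set.Finite.bddAbove (Set.finite_range _)
  have main : ∀ t t' : S, (⨆ a : A, F t a) ≤ (⨆ a : A, F t' a) + (Lr + γ * LP * L) * dist t t' := by
    intro t t'
    refine ciSup_le fun a => ?_
    have := key t t' a
    have h6 : F t' a ≤ ⨆ a : A, F t' a := le_ciSup (hbddA t') a
    linarith
  rw [abs_sub_le_iff]
  constructor
  · have := main s s'
    linarith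
  · have := main s' s
    rw [dist_comm s' s] at this
    linarith
end

section
/- Joint simulation lemma for dynamics and rewards: Let P and P̂ be two transition kernels on the finite state and action spaces S, A, let r and r̂ be reward functions with 0 ≤ r(s,a) ≤ R_max and 0 ≤ r̂(s,a) ≤ R_max, let γ ∈ (0,1) and ρ₀ be an initial distribution. Then for every stationary policy π, |V_π(P, r) − V_π(P̂, r̂)| ≤ (1/(1−γ)) · Σ_{(s,a)} d̄_π(s,a) · ( |r(s,a) − r̂(s,a)| + (γ·R_max/(2(1−γ)))·‖P(·|s,a) − P̂(·|s,a)‖₁ ), where d̄_π is the normalized discounted occupancy of π under P and V_π(Q, ρ) denotes the value of π under kernel Q and reward ρ. -/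
/-!
Write `g = V - V̂`. Subtracting the two Bellman equations shows that `g` is the value of `π`
under `P` for the one-step reward `c(s,a) = r - r̂ + γ ⟨P(·|s,a) - P̂(·|s,a), V̂⟩`, and pairing
any value function with the occupancy equation gives `⟨ρ₀, g⟩ = ⟨d_π, c⟩`. By the maximum
principle `0 ≤ V̂ ≤ R_max / (1 - γ)`, and since `P(·|s,a)` and `P̂(·|s,a)` have equal mass we
may centre `V̂` at `R_max / (2(1 - γ))`, which bounds the transition part of `|c|` by
`γ R_max / (2(1 - γ)) ‖P(·|s,a) - P̂(·|s,a)‖₁`. Finally `d_π ≥ 0`: it solves `d = b + γ dK` with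
`b ≥ 0` and `K` stochastic, so its negative part satisfies `d⁻ ≤ γ d⁻K`, and summing forces
`∑ d⁻ = 0`.
-/

open Finset Real

theorem IsPMF.sum_mul_le {X : Type*} [Fintype X] {p : X → ℝ} (hp : IsPMF p) {f : X → ℝ}
    {c : ℝ} (hf : ∀ x, f x ≤ c) : ∑ x, p x * f x ≤ c :=
  calc ∑ x, p x * f x ≤ ∑ x, p x * c := sum_le_sum fun x _ => by gcongr; exacts [hp.1 x, hf x]
    _ = c := by rw [← sum_mul, hp.2, one_mul]

theorem nonneg_of_eq_add_mul_stochastic {X : Type*} [Fintype X] {K : X → X → ℝ}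
    (hK : ∀ x, IsPMF (K x)) {b f : X → ℝ} (hb : ∀ y, 0 ≤ b y) {γ : ℝ} (hγ0 : 0 ≤ γ)
    (hγ1 : γ < 1) (hf : ∀ y, f y = b y + γ * ∑ x, f x * K x y) (y : X) : 0 ≤ f y := by
  have hstep : ∀ y, (f y)⁻ ≤ γ * ∑ x, (f x)⁻ * K x y := by
    intro y
    have hK_neg : -∑ x, (f x)⁻ * K x y ≤ ∑ x, f x * K x y := by
      rw [← sum_neg_distrib]
      refine sum_le_sum fun x _ => ?_
      nlinarith [neg_le_negPart (f x), (hK x).1 y]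
    have hsum_nonneg : 0 ≤ ∑ x, (f x)⁻ * K x y :=
      sum_nonneg fun x _ => mul_nonneg (negPart_nonneg _) ((hK x).1 y)
    refine sup_le ?_ (by positivity)
    nlinarith [hf y, hb y]
  have htotal : ∑ y, (f y)⁻ ≤ γ * ∑ y, (f y)⁻ :=
    calc ∑ y, (f y)⁻ ≤ ∑ y, γ * ∑ x, (f x)⁻ * K x y := sum_le_sum fun y _ => hstep y
      _ = γ * ∑ x, (f x)⁻ := by
        rw [← mul_sum, sum_comm]
        simp_rw [← mul_sum, (hK _).2, mul_one]
  have hzero : ∑ y, (f y)⁻ = 0 :=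
    le_antisymm (by nlinarith) (sum_nonneg fun y _ => negPart_nonneg _)
  have := (sum_eq_zero_iff_of_nonneg fun y _ => negPart_nonneg (f y)).1 hzero y (mem_univ y)
  exact negPart_eq_zero.1 this

theorem IsOcc.nonneg {S A : Type*} [Fintype S] [Fintype A] {P : S → A → S → ℝ}
    (hP : IsKernel P) {pol : S → A → ℝ} (hpol : IsPolicy pol) {ρ₀ : S → ℝ}
    (hρ : ∀ s, 0 ≤ ρ₀ s) {γ : ℝ} (hγ0 : 0 ≤ γ) (hγ1 : γ < 1) {d : S → A → ℝ}
    (hd : IsOcc P pol ρ₀ γ d) (s : S) (a : A) : 0 ≤ d s a := by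
  let K : S × A → S × A → ℝ := fun x y => P x.1 x.2 y.1 * pol y.1 y.2
  have hK : ∀ x, IsPMF (K x) := fun x =>
    ⟨fun y => mul_nonneg ((hP _ _).1 _) ((hpol _).1 _), by
      simp only [K, Fintype.sum_prod_type, ← mul_sum, (hpol _).2, mul_one, (hP _ _).2]⟩
  refine nonneg_of_eq_add_mul_stochastic hK (b := fun y => pol y.1 y.2 * ρ₀ y.1)
    (f := fun y => d y.1 y.2)
    (fun y => mul_nonneg ((hpol _).1 _) (hρ _)) hγ0 hγ1 (fun y => ?_) (s, a)
  rw [hd y.1 y.2]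
  simp only [K, ← mul_assoc, ← sum_mul]
  ring

section Value

variable {S A : Type*} [Fintype S] [Fintype A] {P : S → A → S → ℝ} {pol : S → A → ℝ}
  {r : S → A → ℝ} {γ : ℝ} {V : S → ℝ}

theorem IsValue.neg (hV : IsValue P pol r γ V) : IsValue P pol (-r) γ (-V) := fun s => by
  rw [Pi.neg_apply, hV s, ← sum_neg_distrib]
  refine sum_congr rfl fun a _ => ?_
  simp only [Pi.neg_apply, mul_neg, sum_neg_distrib]
  ring

theorem IsValue.le_div_of_le (hP : IsKernel P) (hpol : IsPolicy pol) (hγ0 : 0 ≤ γ)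
    (hγ1 : γ < 1) (hV : IsValue P pol r γ V) {c : ℝ} (hr : ∀ s a, r s a ≤ c) (s : S) :
    V s ≤ c / (1 - γ) := by
  obtain ⟨s₀, -, hs₀⟩ := exists_max_image univ V ⟨s, mem_univ s⟩
  have hmax : V s₀ ≤ c + γ * V s₀ := by
    conv_lhs => rw [hV s₀]
    refine (hpol s₀).sum_mul_le fun a => ?_
    have := (hP s₀ a).sum_mul_le fun s' => hs₀ s' (mem_univ s')
    nlinarith [hr s₀ a]
  rw [le_div_iff₀ (by linarith)]
  nlinarith [hs₀ s (mem_univ s)]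

theorem IsValue.nonneg (hP : IsKernel P) (hpol : IsPolicy pol) (hγ0 : 0 ≤ γ)
    (hγ1 : γ < 1) (hV : IsValue P pol r γ V) (hr : ∀ s a, 0 ≤ r s a) (s : S) : 0 ≤ V s := by
  have := hV.neg.le_div_of_le hP hpol hγ0 hγ1 (c := 0) (fun s a => by simpa using hr s a) s
  simpa using this

theorem IsValue.abs_sub_half_le (hP : IsKernel P) (hpol : IsPolicy pol) (hγ0 : 0 ≤ γ)
    (hγ1 : γ < 1) (hV : IsValue P pol r γ V) {Rmax : ℝ} (hr : ∀ s a, 0 ≤ r s a ∧ r s a ≤ Rmax)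
    (s : S) : |V s - Rmax / (2 * (1 - γ))| ≤ Rmax / (2 * (1 - γ)) := by
  have h0 := hV.nonneg hP hpol hγ0 hγ1 (fun s a => (hr s a).1) s
  have h1 := hV.le_div_of_le hP hpol hγ0 hγ1 (fun s a => (hr s a).2) s
  have h2 : Rmax / (1 - γ) = 2 * (Rmax / (2 * (1 - γ))) := by
    field_simp [(by linarith : 1 - γ ≠ 0)]
  rw [abs_le]; constructor <;> linarith

theorem IsValue.sub {Phat : S → A → S → ℝ} {rhat : S → A → ℝ} {Vhat : S → ℝ}
    (hV : IsValue P pol r γ V) (hVhat : IsValue Phat pol rhat γ Vhat) :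
    IsValue P pol (fun s a => r s a - rhat s a + γ * ∑ s', (P s a s' - Phat s a s') * Vhat s')
      γ (V - Vhat) := fun s => by
  rw [Pi.sub_apply, hV s, hVhat s, ← sum_sub_distrib]
  refine sum_congr rfl fun a _ => ?_
  simp only [Pi.sub_apply, mul_sub, sub_mul, sum_sub_distrib]
  ring

theorem IsValue.sum_mul_eq_sum_occ_mul (hV : IsValue P pol r γ V) {ρ₀ : S → ℝ}
    {d : S → A → ℝ} (hd : IsOcc P pol ρ₀ γ d) :
    ∑ s, ρ₀ s * V s = ∑ x : S × A, d x.1 x.2 * r x.1 x.2 := by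
  set PV : S × A → ℝ := fun x => ∑ s', P x.1 x.2 s' * V s'
  have hvisits : ∑ x : S × A, d x.1 x.2 * (r x.1 x.2 + γ * PV x)
      = ∑ s, (ρ₀ s + γ * ∑ y : S × A, d y.1 y.2 * P y.1 y.2 s) * V s := by
    rw [Fintype.sum_prod_type]
    refine sum_congr rfl fun s _ => ?_
    simp only [hd s, hV s, mul_sum, PV]
    exact sum_congr rfl fun a _ => by ring
  have hflow :
      ∑ s, (∑ y : S × A, d y.1 y.2 * P y.1 y.2 s) * V s = ∑ y : S × A, d y.1 y.2 * PV y := by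
    simp only [sum_mul, mul_sum, PV]
    rw [sum_comm]
    exact sum_congr rfl fun y _ => sum_congr rfl fun s _ => by ring
  calc ∑ s, ρ₀ s * V s
      = ∑ x : S × A, d x.1 x.2 * (r x.1 x.2 + γ * PV x)
          - γ * ∑ y : S × A, d y.1 y.2 * PV y := by
        rw [hvisits, ← hflow, mul_sum, ← sum_sub_distrib]
        exact sum_congr rfl fun s _ => by ring
    _ = ∑ x : S × A, d x.1 x.2 * r x.1 x.2 := by
        rw [mul_sum, ← sum_sub_distrib]
        exact sum_congr rfl fun x _ => by ring

end Value

theorem abs_sum_sub_mul_le_mul_l1Dist {X : Type*} [Fintype X] {p q f : X → ℝ}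
    (hpq : ∑ x, p x = ∑ x, q x) {m κ : ℝ} (hf : ∀ x, |f x - m| ≤ κ) :
    |∑ x, (p x - q x) * f x| ≤ κ * l1Dist p q := by
  have hshift : ∑ x, (p x - q x) * f x = ∑ x, (p x - q x) * (f x - m) := by
    simp only [mul_sub, sum_sub_distrib, ← sum_mul, hpq, sub_self, zero_mul, sub_zero]
  calc |∑ x, (p x - q x) * f x| ≤ ∑ x, |p x - q x| * |f x - m| := by
        rw [hshift]; exact (abs_sum_le_sum_abs _ _).trans_eq (by simp only [abs_mul])
    _ ≤ ∑ x, |p x - q x| * κ := sum_le_sum fun x _ => by gcongr; exact hf x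
    _ = κ * l1Dist p q := by rw [l1Dist, ← sum_mul, mul_comm]

theorem joint_simulation_lemma_general
    {S A : Type*} [Fintype S] [Fintype A]
    (P Phat : S → A → S → ℝ) (hP : IsKernel P) (hPhat : IsKernel Phat)
    (r rhat : S → A → ℝ) (Rmax : ℝ)
    (hrhat : ∀ s a, 0 ≤ rhat s a ∧ rhat s a ≤ Rmax)
    (γ : ℝ) (hγ0 : 0 < γ) (hγ1 : γ < 1)
    (ρ₀ : S → ℝ) (hρ : IsPMF ρ₀)
    (pol : S → A → ℝ) (hpol : IsPolicy pol)
    (V Vhat : S → ℝ) (hV : IsValue P pol r γ V) (hVhat : IsValue Phat pol rhat γ Vhat)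
    (dpol : S → A → ℝ) (hd : IsOcc P pol ρ₀ γ dpol) :
    |(∑ s, ρ₀ s * V s) - ∑ s, ρ₀ s * Vhat s| ≤
      (1 / (1 - γ)) *
        ∑ x : S × A, (1 - γ) * dpol x.1 x.2 *
          (|r x.1 x.2 - rhat x.1 x.2| +
            γ * Rmax / (2 * (1 - γ)) * l1Dist (P x.1 x.2) (Phat x.1 x.2)) := by
  have hstep (s : S) (a : A) :
      |r s a - rhat s a + γ * ∑ s', (P s a s' - Phat s a s') * Vhat s'| ≤
        |r s a - rhat s a| + γ * Rmax / (2 * (1 - γ)) * l1Dist (P s a) (Phat s a) := by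
    have := abs_sum_sub_mul_le_mul_l1Dist ((hP s a).2.trans (hPhat s a).2.symm)
      (hVhat.abs_sub_half_le hPhat hpol hγ0.le hγ1 hrhat)
    refine (abs_add_le _ _).trans ?_
    rw [abs_mul, abs_of_pos hγ0, mul_div_assoc, mul_assoc]
    gcongr
  have hd0 := hd.nonneg hP hpol hρ.1 hγ0.le hγ1
  calc |(∑ s, ρ₀ s * V s) - ∑ s, ρ₀ s * Vhat s|
      = |∑ x : S × A, dpol x.1 x.2 * (r x.1 x.2 - rhat x.1 x.2 +
          γ * ∑ s', (P x.1 x.2 s' - Phat x.1 x.2 s') * Vhat s')| := by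
        rw [← (hV.sub hVhat).sum_mul_eq_sum_occ_mul hd, ← sum_sub_distrib]
        simp only [Pi.sub_apply, mul_sub]
    _ ≤ ∑ x : S × A, dpol x.1 x.2 * (|r x.1 x.2 - rhat x.1 x.2| +
          γ * Rmax / (2 * (1 - γ)) * l1Dist (P x.1 x.2) (Phat x.1 x.2)) := by
        refine (abs_sum_le_sum_abs _ _).trans (sum_le_sum fun x _ => ?_)
        rw [abs_mul, abs_of_nonneg (hd0 x.1 x.2)]
        exact mul_le_mul_of_nonneg_left (hstep x.1 x.2) (hd0 x.1 x.2)
    _ = _ := by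
        rw [mul_sum]
        refine sum_congr rfl fun x _ => ?_
        field_simp [(by linarith : 1 - γ ≠ 0)]

/-- **Joint simulation lemma for dynamics and rewards.** The value gap under jointly
differing kernels and rewards is bounded by the normalized-occupancy-weighted sum of
the reward error and the scaled one-step ℓ₁ transition error. -/
theorem joint_simulation_lemma
    {S A : Type*} [Fintype S] [Fintype A] [Nonempty S] [Nonempty A]
    (P Phat : S → A → S → ℝ) (hP : IsKernel P) (hPhat : IsKernel Phat)
    (r rhat : S → A → ℝ) (Rmax : ℝ)
    (hr : ∀ s a, 0 ≤ r s a ∧ r s a ≤ Rmax)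
    (hrhat : ∀ s a, 0 ≤ rhat s a ∧ rhat s a ≤ Rmax)
    (γ : ℝ) (hγ0 : 0 < γ) (hγ1 : γ < 1)
    (ρ₀ : S → ℝ) (hρ : IsPMF ρ₀)
    (pol : S → A → ℝ) (hpol : IsPolicy pol)
    (V Vhat : S → ℝ) (hV : IsValue P pol r γ V) (hVhat : IsValue Phat pol rhat γ Vhat)
    (dpol : S → A → ℝ) (hd : IsOcc P pol ρ₀ γ dpol) :
    |(∑ s, ρ₀ s * V s) - ∑ s, ρ₀ s * Vhat s| ≤
      (1 / (1 - γ)) *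
        ∑ x : S × A, (1 - γ) * dpol x.1 x.2 *
          (|r x.1 x.2 - rhat x.1 x.2| +
            γ * Rmax / (2 * (1 - γ)) * l1Dist (P x.1 x.2) (Phat x.1 x.2)) :=
  joint_simulation_lemma_general P Phat hP hPhat r rhat Rmax hrhat γ hγ0 hγ1 ρ₀ hρ pol hpol V Vhat
    hV hVhat dpol hd
end

section
/- Joint coverage guarantee for dynamics and rewards: Let P and P̂ be two transition kernels on the finite state and action spaces S, A, let r and r̂ be reward functions with 0 ≤ r(s,a) ≤ R_max and 0 ≤ r̂(s,a) ≤ R_max, let γ ∈ (0,1) and ρ₀ be an initial distribution. Let Π be a nonempty set of stationary policies and let d_data be a probability mass function on S × A satisfying κ-coverage for Π under P. Define the joint local error c_joint(s,a) = |r(s,a) − r̂(s,a)| + (γ·R_max/(1−γ))·TV(P(·|s,a), P̂(·|s,a)). Then for every π ∈ Π, |V_π(P, r) − V_π(P̂, r̂)| ≤ κ · Σ_{(s,a)} d_data(s,a)·c_joint(s,a). -/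
open Finset Real

section aux
variable {S A : Type*} [Fintype S] [Fintype A]

/-- step-t occupancy sequence -/
noncomputable def dseq (P : S → A → S → ℝ) (pol : S → A → ℝ) (ρ₀ : S → ℝ) : ℕ → S → A → ℝ
  | 0 => fun s a => pol s a * ρ₀ s
  | (t+1) => fun s a => pol s a * ∑ x : S × A, dseq P pol ρ₀ t x.1 x.2 * P x.1 x.2 s

lemma dseq_nonneg (P : S → A → S → ℝ) (hP : IsKernel P) (pol : S → A → ℝ)
    (hpol : IsPolicy pol) (ρ₀ : S → ℝ) (hρ : IsPMF ρ₀) :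
    ∀ t s a, 0 ≤ dseq P pol ρ₀ t s a := by
  intro t
  induction t with
  | zero => intro s a; exact mul_nonneg ((hpol s).1 a) (hρ.1 s)
  | succ t ih =>
    intro s a
    exact mul_nonneg ((hpol s).1 a)
      (Finset.sum_nonneg fun x _ => mul_nonneg (ih x.1 x.2) ((hP x.1 x.2).1 s))

lemma dseq_mass (P : S → A → S → ℝ) (hP : IsKernel P) (pol : S → A → ℝ)
    (hpol : IsPolicy pol) (ρ₀ : S → ℝ) (hρ : IsPMF ρ₀) :
    ∀ t, ∑ x : S × A, dseq P pol ρ₀ t x.1 x.2 = 1 := by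
  intro t
  induction t with
  | zero =>
    rw [Fintype.sum_prod_type]
    simp only [dseq]
    calc ∑ s, ∑ a, pol s a * ρ₀ s = ∑ s, (∑ a, pol s a) * ρ₀ s := by
          simp [Finset.sum_mul]
      _ = ∑ s, ρ₀ s := by
          refine Finset.sum_congr rfl fun s _ => ?_
          rw [(hpol s).2, one_mul]
      _ = 1 := hρ.2
  | succ t ih =>
    rw [Fintype.sum_prod_type]
    simp only [dseq]
    calc ∑ s, ∑ a, pol s a * ∑ x : S × A, dseq P pol ρ₀ t x.1 x.2 * P x.1 x.2 s
        = ∑ s, (∑ a, pol s a) * ∑ x : S × A, dseq P pol ρ₀ t x.1 x.2 * P x.1 x.2 s := by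
          simp [Finset.sum_mul]
      _ = ∑ s, ∑ x : S × A, dseq P pol ρ₀ t x.1 x.2 * P x.1 x.2 s := by
          refine Finset.sum_congr rfl fun s _ => ?_
          rw [(hpol s).2, one_mul]
      _ = ∑ x : S × A, ∑ s, dseq P pol ρ₀ t x.1 x.2 * P x.1 x.2 s := Finset.sum_comm
      _ = ∑ x : S × A, dseq P pol ρ₀ t x.1 x.2 * ∑ s, P x.1 x.2 s := by
          simp [Finset.mul_sum]
      _ = ∑ x : S × A, dseq P pol ρ₀ t x.1 x.2 := by
          refine Finset.sum_congr rfl fun x _ => ?_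
          rw [(hP x.1 x.2).2, mul_one]
      _ = 1 := ih

lemma dseq_le_one (P : S → A → S → ℝ) (hP : IsKernel P) (pol : S → A → ℝ)
    (hpol : IsPolicy pol) (ρ₀ : S → ℝ) (hρ : IsPMF ρ₀) :
    ∀ t s a, dseq P pol ρ₀ t s a ≤ 1 := by
  intro t s a
  have h := dseq_mass P hP pol hpol ρ₀ hρ t
  calc dseq P pol ρ₀ t s a = dseq P pol ρ₀ t (s, a).1 (s, a).2 := rfl
    _ ≤ ∑ x : S × A, dseq P pol ρ₀ t x.1 x.2 :=
        Finset.single_le_sum (fun x _ => dseq_nonneg P hP pol hpol ρ₀ hρ t x.1 x.2)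
          (Finset.mem_univ (s, a))
    _ = 1 := h

lemma exists_occ (P : S → A → S → ℝ) (hP : IsKernel P) (pol : S → A → ℝ)
    (hpol : IsPolicy pol) (ρ₀ : S → ℝ) (hρ : IsPMF ρ₀) (γ : ℝ) (hγ0 : 0 < γ) (hγ1 : γ < 1) :
    ∃ d : S → A → ℝ, IsOcc P pol ρ₀ γ d ∧ ∀ s a, 0 ≤ d s a := by
  have hge := hγ0.le
  have hsumm : ∀ s a, Summable (fun t => γ ^ t * dseq P pol ρ₀ t s a) := by
    intro s a
    refine Summable.of_nonneg_of_le
      (fun t => mul_nonneg (pow_nonneg hge t) (dseq_nonneg P hP pol hpol ρ₀ hρ t s a))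
      (fun t => ?_) (summable_geometric_of_lt_one hge hγ1)
    calc γ ^ t * dseq P pol ρ₀ t s a ≤ γ ^ t * 1 :=
        mul_le_mul_of_nonneg_left (dseq_le_one P hP pol hpol ρ₀ hρ t s a) (pow_nonneg hge t)
      _ = γ ^ t := mul_one _
  refine ⟨fun s a => ∑' t, γ ^ t * dseq P pol ρ₀ t s a, ?_, ?_⟩
  · intro s a
    have h0 : (∑' t, γ ^ t * dseq P pol ρ₀ t s a)
        = pol s a * ρ₀ s + ∑' t, γ ^ (t+1) * dseq P pol ρ₀ (t+1) s a := by
      rw [Summable.tsum_eq_zero_add (hsumm s a)]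
      simp [dseq]
    show (∑' t, γ ^ t * dseq P pol ρ₀ t s a)
        = pol s a * (ρ₀ s + γ * ∑ x : S × A,
            (∑' t, γ ^ t * dseq P pol ρ₀ t x.1 x.2) * P x.1 x.2 s)
    rw [h0]
    have h1 : ∀ t : ℕ, γ ^ (t+1) * dseq P pol ρ₀ (t+1) s a
        = pol s a * γ * ∑ x : S × A, (γ ^ t * dseq P pol ρ₀ t x.1 x.2) * P x.1 x.2 s := by
      intro t
      simp only [dseq, pow_succ, Finset.mul_sum]
      refine Finset.sum_congr rfl fun x _ => ?_
      ring
    have hsumm2 : ∀ x : S × A, Summable (fun t => (γ ^ t * dseq P pol ρ₀ t x.1 x.2) * P x.1 x.2 s) :=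
      fun x => (hsumm x.1 x.2).mul_right _
    calc pol s a * ρ₀ s + ∑' t, γ ^ (t+1) * dseq P pol ρ₀ (t+1) s a
        = pol s a * ρ₀ s + pol s a * γ *
            ∑' t, ∑ x : S × A, (γ ^ t * dseq P pol ρ₀ t x.1 x.2) * P x.1 x.2 s := by
          rw [tsum_congr h1, tsum_mul_left]
      _ = pol s a * ρ₀ s + pol s a * γ *
            ∑ x : S × A, ∑' t, (γ ^ t * dseq P pol ρ₀ t x.1 x.2) * P x.1 x.2 s := by
          rw [Summable.tsum_finsetSum (fun x _ => hsumm2 x)]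
      _ = pol s a * (ρ₀ s + γ * ∑ x : S × A,
            (∑' t, γ ^ t * dseq P pol ρ₀ t x.1 x.2) * P x.1 x.2 s) := by
          rw [mul_add]
          congr 1
          rw [← mul_assoc]
          congr 1
          refine Finset.sum_congr rfl fun x _ => ?_
          rw [tsum_mul_right]
  · intro s a
    exact tsum_nonneg fun t => mul_nonneg (pow_nonneg hge t)
      (dseq_nonneg P hP pol hpol ρ₀ hρ t s a)


lemma value_bounds [Nonempty S] (P : S → A → S → ℝ) (hP : IsKernel P) (pol : S → A → ℝ)
    (hpol : IsPolicy pol) (r : S → A → ℝ) (Rmax : ℝ)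
    (hr : ∀ s a, 0 ≤ r s a ∧ r s a ≤ Rmax) (γ : ℝ) (hγ0 : 0 ≤ γ) (hγ1 : γ < 1)
    (V : S → ℝ) (hV : IsValue P pol r γ V) :
    ∀ s, 0 ≤ V s ∧ V s ≤ Rmax / (1 - γ) := by
  have h1γ : 0 < 1 - γ := by linarith
  obtain ⟨s₀, -, hs₀⟩ := Finset.exists_max_image Finset.univ V ⟨Classical.arbitrary S, Finset.mem_univ _⟩
  obtain ⟨s₁, -, hs₁⟩ := Finset.exists_min_image Finset.univ V ⟨Classical.arbitrary S, Finset.mem_univ _⟩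
  have hmax : V s₀ ≤ Rmax + γ * V s₀ := by
    have h2 : ∑ a, pol s₀ a * (r s₀ a + γ * ∑ s', P s₀ a s' * V s')
        ≤ ∑ a, pol s₀ a * (Rmax + γ * V s₀) := by
      refine Finset.sum_le_sum fun a _ => ?_
      refine mul_le_mul_of_nonneg_left ?_ ((hpol s₀).1 a)
      have hsum : ∑ s', P s₀ a s' * V s' ≤ V s₀ := by
        have h3 : ∑ s', P s₀ a s' * V s' ≤ ∑ s', P s₀ a s' * V s₀ :=
          Finset.sum_le_sum fun s' _ =>
            mul_le_mul_of_nonneg_left (hs₀ s' (Finset.mem_univ _)) ((hP s₀ a).1 s')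
        have h4 : ∑ s', P s₀ a s' * V s₀ = V s₀ := by
          rw [← Finset.sum_mul, (hP s₀ a).2, one_mul]
        linarith
      have := mul_le_mul_of_nonneg_left hsum hγ0
      linarith [(hr s₀ a).2]
    have h5 : ∑ a, pol s₀ a * (Rmax + γ * V s₀) = Rmax + γ * V s₀ := by
      rw [← Finset.sum_mul, (hpol s₀).2, one_mul]
    calc V s₀ = ∑ a, pol s₀ a * (r s₀ a + γ * ∑ s', P s₀ a s' * V s') := hV s₀
      _ ≤ ∑ a, pol s₀ a * (Rmax + γ * V s₀) := h2
      _ = Rmax + γ * V s₀ := h5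
  have hmin : γ * V s₁ ≤ V s₁ := by
    have h2 : ∑ a, pol s₁ a * (γ * V s₁)
        ≤ ∑ a, pol s₁ a * (r s₁ a + γ * ∑ s', P s₁ a s' * V s') := by
      refine Finset.sum_le_sum fun a _ => ?_
      refine mul_le_mul_of_nonneg_left ?_ ((hpol s₁).1 a)
      have hsum : V s₁ ≤ ∑ s', P s₁ a s' * V s' := by
        have h3 : ∑ s', P s₁ a s' * V s₁ ≤ ∑ s', P s₁ a s' * V s' :=
          Finset.sum_le_sum fun s' _ =>
            mul_le_mul_of_nonneg_left (hs₁ s' (Finset.mem_univ _)) ((hP s₁ a).1 s')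
        have h4 : ∑ s', P s₁ a s' * V s₁ = V s₁ := by
          rw [← Finset.sum_mul, (hP s₁ a).2, one_mul]
        linarith
      have := mul_le_mul_of_nonneg_left hsum hγ0
      linarith [(hr s₁ a).1]
    have h5 : ∑ a, pol s₁ a * (γ * V s₁) = γ * V s₁ := by
      rw [← Finset.sum_mul, (hpol s₁).2, one_mul]
    calc γ * V s₁ = ∑ a, pol s₁ a * (γ * V s₁) := h5.symm
      _ ≤ ∑ a, pol s₁ a * (r s₁ a + γ * ∑ s', P s₁ a s' * V s') := h2
      _ = V s₁ := (hV s₁).symm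
  have hVmax : V s₀ ≤ Rmax / (1 - γ) := by rw [le_div_iff₀ h1γ]; nlinarith
  have hVmin : 0 ≤ V s₁ := by nlinarith
  intro s
  exact ⟨le_trans hVmin (hs₁ s (Finset.mem_univ _)),
    le_trans (hs₀ s (Finset.mem_univ _)) hVmax⟩

lemma occ_identity (P Phat : S → A → S → ℝ) (pol : S → A → ℝ) (hpol : IsPolicy pol)
    (r rhat : S → A → ℝ) (γ : ℝ) (ρ₀ : S → ℝ)
    (d : S → A → ℝ) (hd : IsOcc P pol ρ₀ γ d)
    (V Vhat : S → ℝ) (hV : IsValue P pol r γ V) (hVhat : IsValue Phat pol rhat γ Vhat) :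
    (∑ s, ρ₀ s * V s) - ∑ s, ρ₀ s * Vhat s =
      ∑ x : S × A, d x.1 x.2 *
        (r x.1 x.2 - rhat x.1 x.2 + γ * ∑ s', (P x.1 x.2 s' - Phat x.1 x.2 s') * Vhat s') := by
  set Δ : S → ℝ := fun s => V s - Vhat s with hΔ
  set e : S → A → ℝ := fun s a =>
    r s a - rhat s a + γ * ∑ s', (P s a s' - Phat s a s') * Vhat s' with he
  set f : S → A → ℝ := fun s a => e s a + γ * ∑ s', P s a s' * Δ s' with hf
  have stepA : ∀ s, Δ s = ∑ a, pol s a * f s a := by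
    intro s
    have : Δ s = ∑ a, pol s a *
        ((r s a + γ * ∑ s', P s a s' * V s') - (rhat s a + γ * ∑ s', Phat s a s' * Vhat s')) := by
      simp only [hΔ, hV s, hVhat s, ← Finset.sum_sub_distrib, mul_sub]
    rw [this]
    refine Finset.sum_congr rfl fun a _ => ?_
    congr 1
    simp only [hf, he, hΔ]
    have : ∑ s', P s a s' * V s' =
        ∑ s', ((P s a s' - Phat s a s') * Vhat s' + Phat s a s' * Vhat s'
          + P s a s' * (V s' - Vhat s')) := by
      refine Finset.sum_congr rfl fun s' _ => ?_; ring
    rw [this, Finset.sum_add_distrib, Finset.sum_add_distrib]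
    ring
  have expand : ∑ x : S × A, d x.1 x.2 * f x.1 x.2 =
      (∑ x : S × A, d x.1 x.2 * e x.1 x.2) +
        γ * ∑ x : S × A, d x.1 x.2 * ∑ s', P x.1 x.2 s' * Δ s' := by
    simp only [hf, mul_add, Finset.sum_add_distrib, Finset.mul_sum]
    congr 1
    refine Finset.sum_congr rfl fun x _ => ?_
    exact Finset.sum_congr rfl fun i _ => by ring
  have expand2 : ∑ x : S × A, d x.1 x.2 * f x.1 x.2 =
      (∑ s, ρ₀ s * Δ s) +
        γ * ∑ x : S × A, d x.1 x.2 * ∑ s', P x.1 x.2 s' * Δ s' := by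
    have swap : ∑ s, (∑ y : S × A, d y.1 y.2 * P y.1 y.2 s) * Δ s
        = ∑ x : S × A, d x.1 x.2 * ∑ s', P x.1 x.2 s' * Δ s' := by
      calc ∑ s, (∑ y : S × A, d y.1 y.2 * P y.1 y.2 s) * Δ s
          = ∑ s, ∑ y : S × A, d y.1 y.2 * P y.1 y.2 s * Δ s :=
            Finset.sum_congr rfl fun s _ => Finset.sum_mul _ _ _
        _ = ∑ y : S × A, ∑ s, d y.1 y.2 * P y.1 y.2 s * Δ s := Finset.sum_comm
        _ = ∑ x : S × A, d x.1 x.2 * ∑ s', P x.1 x.2 s' * Δ s' := by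
            refine Finset.sum_congr rfl fun y _ => ?_
            rw [Finset.mul_sum]
            exact Finset.sum_congr rfl fun s _ => by ring
    calc ∑ x : S × A, d x.1 x.2 * f x.1 x.2
        = ∑ s, (ρ₀ s + γ * ∑ y : S × A, d y.1 y.2 * P y.1 y.2 s) * ∑ a, pol s a * f s a := by
          rw [Fintype.sum_prod_type]
          refine Finset.sum_congr rfl fun s _ => ?_
          rw [Finset.mul_sum]
          refine Finset.sum_congr rfl fun a _ => ?_
          rw [hd s a]; ring
      _ = ∑ s, (ρ₀ s + γ * ∑ y : S × A, d y.1 y.2 * P y.1 y.2 s) * Δ s :=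
          Finset.sum_congr rfl fun s _ => by rw [← stepA s]
      _ = (∑ s, ρ₀ s * Δ s) + γ * ∑ s, (∑ y : S × A, d y.1 y.2 * P y.1 y.2 s) * Δ s := by
          rw [Finset.mul_sum, ← Finset.sum_add_distrib]
          refine Finset.sum_congr rfl fun s _ => ?_
          ring
      _ = _ := by rw [swap]
  have key : ∑ s, ρ₀ s * Δ s = ∑ x : S × A, d x.1 x.2 * e x.1 x.2 := by linarith
  have lhs : (∑ s, ρ₀ s * V s) - ∑ s, ρ₀ s * Vhat s = ∑ s, ρ₀ s * Δ s := by
    rw [← Finset.sum_sub_distrib]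
    refine Finset.sum_congr rfl fun s _ => ?_
    simp only [hΔ]; ring
  rw [lhs, key]

end aux

/-- **Joint coverage guarantee for dynamics and rewards.** Under κ-coverage, the value
gap of every policy in `Pol` is bounded by the `ddata`-weighted joint local error
combining reward error and scaled one-step TV transition error. -/
theorem joint_coverage_guarantee
    {S A : Type*} [Fintype S] [Fintype A] [Nonempty S] [Nonempty A]
    (P Phat : S → A → S → ℝ) (hP : IsKernel P) (hPhat : IsKernel Phat)
    (r rhat : S → A → ℝ) (Rmax : ℝ)
    (hr : ∀ s a, 0 ≤ r s a ∧ r s a ≤ Rmax)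
    (hrhat : ∀ s a, 0 ≤ rhat s a ∧ rhat s a ≤ Rmax)
    (γ : ℝ) (hγ0 : 0 < γ) (hγ1 : γ < 1)
    (ρ₀ : S → ℝ) (hρ : IsPMF ρ₀)
    (Pol : Set (S → A → ℝ)) (hPolNe : Pol.Nonempty) (hPol : ∀ p ∈ Pol, IsPolicy p)
    (ddata : S → A → ℝ) (hdata : IsPMF (fun x : S × A => ddata x.1 x.2))
    (κ : ℝ) (hκ : 0 < κ)
    (hcov : KappaCoverage P ρ₀ γ Pol ddata κ) :
    ∀ p ∈ Pol, ∀ V Vhat : S → ℝ, IsValue P p r γ V → IsValue Phat p rhat γ Vhat →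
      |(∑ s, ρ₀ s * V s) - ∑ s, ρ₀ s * Vhat s| ≤
        κ * ∑ x : S × A, ddata x.1 x.2 *
          (|r x.1 x.2 - rhat x.1 x.2| +
            γ * Rmax / (1 - γ) * tvDist (P x.1 x.2) (Phat x.1 x.2)) := by
  intro p hp V Vhat hV hVhat
  have hpol := hPol p hp
  have h1γ : 0 < 1 - γ := by linarith
  have hRmax : 0 ≤ Rmax := by
    obtain ⟨s⟩ := (inferInstance : Nonempty S)
    obtain ⟨a⟩ := (inferInstance : Nonempty A)
    exact le_trans (hr s a).1 (hr s a).2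
  obtain ⟨d, hd, hd0⟩ := exists_occ P hP p hpol ρ₀ hρ γ hγ0 hγ1
  have hdcov := hcov p hp d hd
  have hVb := value_bounds Phat hPhat p hpol rhat Rmax hrhat γ hγ0.le hγ1 Vhat hVhat
  rw [occ_identity P Phat p hpol r rhat γ ρ₀ d hd V Vhat hV hVhat]
  set E : S × A → ℝ := fun x =>
    r x.1 x.2 - rhat x.1 x.2 + γ * ∑ s', (P x.1 x.2 s' - Phat x.1 x.2 s') * Vhat s' with hE
  set c : S × A → ℝ := fun x =>
    |r x.1 x.2 - rhat x.1 x.2| + γ * Rmax / (1 - γ) * tvDist (P x.1 x.2) (Phat x.1 x.2) with hc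
  have hEbound : ∀ x : S × A, |E x| ≤ c x := by
    rintro ⟨s, a⟩
    set c0 : ℝ := Rmax / (1 - γ) / 2 with hc0
    have hc0nn : 0 ≤ c0 := div_nonneg (div_nonneg hRmax h1γ.le) two_pos.le
    have hzero : ∑ s', (P s a s' - Phat s a s') = 0 := by
      rw [Finset.sum_sub_distrib, (hP s a).2, (hPhat s a).2, sub_self]
    have heq : ∑ s', (P s a s' - Phat s a s') * Vhat s'
        = ∑ s', (P s a s' - Phat s a s') * (Vhat s' - c0) := by
      have : ∑ s', (P s a s' - Phat s a s') * (Vhat s' - c0)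
          = (∑ s', (P s a s' - Phat s a s') * Vhat s')
            - (∑ s', (P s a s' - Phat s a s')) * c0 := by
        rw [Finset.sum_mul, ← Finset.sum_sub_distrib]
        exact Finset.sum_congr rfl fun s' _ => by ring
      rw [this, hzero, zero_mul, sub_zero]
    have habs : |∑ s', (P s a s' - Phat s a s') * Vhat s'|
        ≤ c0 * ∑ s', |P s a s' - Phat s a s'| := by
      rw [heq]
      calc |∑ s', (P s a s' - Phat s a s') * (Vhat s' - c0)|
          ≤ ∑ s', |(P s a s' - Phat s a s') * (Vhat s' - c0)| :=
            Finset.abs_sum_le_sum_abs _ _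
        _ ≤ ∑ s', |P s a s' - Phat s a s'| * c0 := by
            refine Finset.sum_le_sum fun s' _ => ?_
            rw [abs_mul]
            refine mul_le_mul_of_nonneg_left ?_ (abs_nonneg _)
            rw [abs_le]
            have h1 := (hVb s').1
            have h2 := (hVb s').2
            have h2c : 2 * c0 = Rmax / (1 - γ) := by rw [hc0]; ring
            constructor <;> [linarith; linarith]
        _ = c0 * ∑ s', |P s a s' - Phat s a s'| := by
            rw [Finset.mul_sum]
            exact Finset.sum_congr rfl fun s' _ => by ring
    have htv : c0 * ∑ s', |P s a s' - Phat s a s'|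
        = Rmax / (1 - γ) * tvDist (P s a) (Phat s a) := by
      rw [tvDist, hc0]
      ring
    calc |E (s, a)| ≤ |r s a - rhat s a| + γ * |∑ s', (P s a s' - Phat s a s') * Vhat s'| := by
          rw [hE]
          simp only []
          calc |r s a - rhat s a + γ * ∑ s', (P s a s' - Phat s a s') * Vhat s'|
              ≤ |r s a - rhat s a| + |γ * ∑ s', (P s a s' - Phat s a s') * Vhat s'| :=
                abs_add_le _ _
            _ = |r s a - rhat s a| + γ * |∑ s', (P s a s' - Phat s a s') * Vhat s'| := by
                rw [abs_mul, abs_of_nonneg hγ0.le]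
      _ ≤ |r s a - rhat s a| + γ * (Rmax / (1 - γ) * tvDist (P s a) (Phat s a)) := by
          have h6 := mul_le_mul_of_nonneg_left (htv ▸ habs) hγ0.le
          linarith
      _ = c (s, a) := by rw [hc]; simp only []; ring
  have hcnn : ∀ x : S × A, 0 ≤ c x := fun x => le_trans (abs_nonneg _) (hEbound x)
  calc |∑ x : S × A, d x.1 x.2 * E x|
      ≤ ∑ x : S × A, |d x.1 x.2 * E x| := Finset.abs_sum_le_sum_abs _ _
    _ = ∑ x : S × A, d x.1 x.2 * |E x| := by
        refine Finset.sum_congr rfl fun x _ => ?_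
        rw [abs_mul, abs_of_nonneg (hd0 x.1 x.2)]
    _ ≤ ∑ x : S × A, κ * ddata x.1 x.2 * c x := by
        refine Finset.sum_le_sum fun x _ => ?_
        calc d x.1 x.2 * |E x| ≤ κ * ddata x.1 x.2 * |E x| :=
            mul_le_mul_of_nonneg_right (hdcov x.1 x.2) (abs_nonneg _)
          _ ≤ κ * ddata x.1 x.2 * c x := by
              refine mul_le_mul_of_nonneg_left (hEbound x) ?_
              have := hdata.1 x
              positivity
    _ = κ * ∑ x : S × A, ddata x.1 x.2 * c x := by
        rw [Finset.mul_sum]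
        exact Finset.sum_congr rfl fun x _ => by ring
end
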